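/- arXiv:1906.08050 — 9 statements merged into one kernel-verified Lean document; each statement's English description precedes it below -/
import Mathlib

section
/- (Proposition 1, converse direction.) Let Σ be a symmetric invertible real p×p matrix and let L be any real p×p matrix satisfying L·Σ + Σ·Lᵀ = 2·I_p. Then κ := L·Σ − I_p is skew-symmetric and L = (I_p + κ)·Σ⁻¹. Hence every solution of the Lyapunov equation is of the form (I_p + κ)·Σ⁻¹ for some skew-symmetric κ. -/
open Matrix

/-- Proposition 1, converse direction: if `Sig` is symmetric and invertible and `L`
satisfies the Lyapunov equation `L * Sig + Sig * Lᵀ = 2 • I`, then `κ := L * Sig - I`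
is skew-symmetric and `L = (I + κ) * Sig⁻¹`. -/
theorem stmt_2 (p : ℕ) (Sig L : Matrix (Fin p) (Fin p) ℝ)
    (hSigSymm : Sigᵀ = Sig) (hSigInv : IsUnit Sig.det)
    (hLyap : L * Sig + Sig * Lᵀ = (2 : ℝ) • (1 : Matrix (Fin p) (Fin p) ℝ)) :
    (L * Sig - 1)ᵀ = -(L * Sig - 1) ∧ L = (1 + (L * Sig - 1)) * Sig⁻¹ := by
  have h1 : Sig * Lᵀ = (2 : ℝ) • (1 : Matrix (Fin p) (Fin p) ℝ) - L * Sig := by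
    exact eq_sub_of_add_eq' hLyap
  constructor
  · rw [transpose_sub, transpose_mul, transpose_one, hSigSymm, h1]
    ext i j
    simp [Matrix.sub_apply, Matrix.smul_apply, Matrix.one_apply]
    split <;> ring
  · have : (1 + (L * Sig - 1)) = L * Sig := by abel
    rw [this, mul_assoc, Matrix.mul_nonsing_inv _ hSigInv, mul_one]
end

section
/- (Conditional block Lyapunov equation, Theorem 3, matrix form.) Let Σ be a symmetric positive definite real p×p matrix partitioned into blocks Σ = [[Σ_aa, Σ_ab],[Σ_abᵀ, Σ_bb]] with Σ_aa ∈ ℝ^{2×2} and Σ_bb positive definite, let P = Σ⁻¹ be partitioned conformably, and let L be a real p×p matrix, partitioned conformably, satisfying L·Σ + Σ·Lᵀ = 2·I_p. Define the conditional covariance Σ_{a|b} := Σ_aa − Σ_ab·Σ_bb⁻¹·Σ_abᵀ and the 2×2 matrix P̃_aa := L_aa + Σ_ab·Σ_bb⁻¹·(P_ba − L_ba). Then P̃_aa·Σ_{a|b} + Σ_{a|b}·P̃_aaᵀ = 2·I_2. -/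
open Matrix

lemma aux_stmt4 {m n : Type*} [Fintype m] [Fintype n] [DecidableEq m] [DecidableEq n]
    (A S La : Matrix m m ℝ) (B Lb : Matrix m n ℝ) (Lc Pba : Matrix n m ℝ) (D Ld E : Matrix n n ℝ)
    (hA : Aᵀ = A) (hDsym : Dᵀ = D) (hE : Eᵀ = E) (hDE : D * E = 1) (hED : E * D = 1)
    (hS : S = A - B * E * Bᵀ)
    (hP : Pba * S = -(E * Bᵀ))
    (h1 : La * A + Lb * Bᵀ + A * Laᵀ + B * Lbᵀ = (2:ℝ) • (1 : Matrix m m ℝ))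
    (h2 : La * B + Lb * D + A * Lcᵀ + B * Ldᵀ = 0)
    (h4 : Lc * B + Ld * D + Bᵀ * Lcᵀ + D * Ldᵀ = (2:ℝ) • (1 : Matrix n n ℝ)) :
    (La + B * E * (Pba - Lc)) * S + S * (La + B * E * (Pba - Lc))ᵀ
      = (2:ℝ) • (1 : Matrix m m ℝ) := by
  have hSt : Sᵀ = S := by
    rw [hS]
    simp [transpose_sub, transpose_mul, hA, hE, Matrix.mul_assoc]
  have hP2 : S * Pbaᵀ = -(B * E) := by
    have h := congrArg Matrix.transpose hP
    simp only [transpose_mul, transpose_neg, transpose_transpose, hSt, hE] at h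
    exact h
  -- h2 multiplied by E on the right
  have hX : La * B * E + Lb + A * Lcᵀ * E + B * Ldᵀ * E = 0 := by
    have h : (La * B + Lb * D + A * Lcᵀ + B * Ldᵀ) * E = 0 := by
      rw [h2, Matrix.zero_mul]
    calc La * B * E + Lb + A * Lcᵀ * E + B * Ldᵀ * E
        = La * B * E + Lb * (D * E) + A * Lcᵀ * E + B * Ldᵀ * E := by
          rw [hDE, Matrix.mul_one]
      _ = (La * B + Lb * D + A * Lcᵀ + B * Ldᵀ) * E := by
          simp only [Matrix.mul_add, Matrix.add_mul, Matrix.sub_mul, Matrix.mul_sub, Matrix.neg_mul, Matrix.mul_neg, Matrix.mul_assoc, Matrix.smul_mul, Matrix.mul_smul]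
      _ = 0 := h
  have h2t : Bᵀ * Laᵀ + D * Lbᵀ + Lc * A + Ld * Bᵀ = 0 := by
    have h := congrArg Matrix.transpose h2
    simp only [transpose_add, transpose_mul, transpose_zero, transpose_transpose,
      hA, hDsym] at h
    exact h
  have hXt : E * Bᵀ * Laᵀ + Lbᵀ + E * Lc * A + E * Ld * Bᵀ = 0 := by
    have h : E * (Bᵀ * Laᵀ + D * Lbᵀ + Lc * A + Ld * Bᵀ) = 0 := by
      rw [h2t, Matrix.mul_zero]
    calc E * Bᵀ * Laᵀ + Lbᵀ + E * Lc * A + E * Ld * Bᵀ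
        = E * Bᵀ * Laᵀ + (E * D) * Lbᵀ + E * Lc * A + E * Ld * Bᵀ := by
          rw [hED, Matrix.one_mul]
      _ = E * (Bᵀ * Laᵀ + D * Lbᵀ + Lc * A + Ld * Bᵀ) := by
          simp only [Matrix.mul_add, Matrix.add_mul, Matrix.sub_mul, Matrix.mul_sub, Matrix.neg_mul, Matrix.mul_neg, Matrix.mul_assoc, Matrix.smul_mul, Matrix.mul_smul]
      _ = 0 := h
  -- h4 sandwiched by E
  have hY : E * Lc * B * E + E * Ld + Ldᵀ * E + E * Bᵀ * Lcᵀ * E = (2:ℝ) • (E * E) := by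
    calc E * Lc * B * E + E * Ld + Ldᵀ * E + E * Bᵀ * Lcᵀ * E
        = E * Lc * B * E + (E * Ld) * (D * E) + (E * D) * (Ldᵀ * E)
            + E * Bᵀ * Lcᵀ * E := by
          rw [hDE, hED, Matrix.mul_one, Matrix.one_mul]
      _ = E * (Lc * B + Ld * D + Bᵀ * Lcᵀ + D * Ldᵀ) * E := by
          simp only [Matrix.mul_add, Matrix.add_mul, Matrix.sub_mul, Matrix.mul_sub, Matrix.neg_mul, Matrix.mul_neg, Matrix.mul_assoc, Matrix.smul_mul, Matrix.mul_smul]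
          abel
      _ = E * ((2:ℝ) • (1 : Matrix n n ℝ)) * E := by rw [h4]
      _ = (2:ℝ) • (E * E) := by
          rw [Matrix.mul_smul, Matrix.mul_one, Matrix.smul_mul]
  -- main computation
  have hT : (La + B * E * (Pba - Lc))ᵀ = Laᵀ + (Pbaᵀ - Lcᵀ) * (E * Bᵀ) := by
    simp only [transpose_add, transpose_mul, transpose_sub, hE, Matrix.mul_assoc]
  have key : (La + B * E * (Pba - Lc)) * S + S * (La + B * E * (Pba - Lc))ᵀ
      = La * S + S * Laᵀ + (B * E) * (Pba * S) + (S * Pbaᵀ) * (E * Bᵀ)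
        - (B * E) * (Lc * S) - (S * Lcᵀ) * (E * Bᵀ) := by
    rw [hT]
    simp only [Matrix.mul_add, Matrix.add_mul, Matrix.sub_mul, Matrix.mul_sub, Matrix.neg_mul, Matrix.mul_neg, Matrix.mul_assoc, Matrix.smul_mul, Matrix.mul_smul]
    abel
  rw [key, hP, hP2]
  -- now a transpose-free identity; rewrite with hS and finish
  rw [hS]
  have expand : La * (A - B * E * Bᵀ) + (A - B * E * Bᵀ) * Laᵀ
      + B * E * -(E * Bᵀ) + -(B * E) * (E * Bᵀ)
      - B * E * (Lc * (A - B * E * Bᵀ))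
      - (A - B * E * Bᵀ) * Lcᵀ * (E * Bᵀ)
      = (La * A + Lb * Bᵀ + A * Laᵀ + B * Lbᵀ)
        - (La * B * E + Lb + A * Lcᵀ * E + B * Ldᵀ * E) * Bᵀ
        - B * (E * Bᵀ * Laᵀ + Lbᵀ + E * Lc * A + E * Ld * Bᵀ)
        + B * (E * Lc * B * E + E * Ld + Ldᵀ * E + E * Bᵀ * Lcᵀ * E) * Bᵀ
        - (2:ℝ) • (B * (E * E) * Bᵀ) := by
    simp only [Matrix.mul_add, Matrix.add_mul, Matrix.sub_mul, Matrix.mul_sub, Matrix.neg_mul, Matrix.mul_neg, Matrix.mul_assoc, Matrix.smul_mul, Matrix.mul_smul]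
    simp only [two_smul]
    abel
  rw [expand, h1, hX, hXt, hY]
  rw [Matrix.zero_mul, Matrix.mul_zero]
  rw [Matrix.mul_smul, Matrix.smul_mul]
  rw [Matrix.mul_assoc]
  abel

/-- Conditional block Lyapunov equation (Theorem 3, matrix form). The index set is
`Fin 2 ⊕ Fin q` (block `a` of size 2 and block `b` of size `q = p - 2 ≥ 1`). If `Sig` is
symmetric positive definite (with positive definite lower-right block), `P = Sig⁻¹`, and
`L` satisfies `L * Sig + Sig * Lᵀ = 2 • I`, then with
`Scond = Sig_aa - Sig_ab * Sig_bb⁻¹ * Sig_abᵀ` and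
`Ptilde = L_aa + Sig_ab * Sig_bb⁻¹ * (P_ba - L_ba)` one has
`Ptilde * Scond + Scond * Ptildeᵀ = 2 • I₂`. -/
theorem stmt_4 (q : ℕ) (hq : 1 ≤ q)
    (Sig L : Matrix (Fin 2 ⊕ Fin q) (Fin 2 ⊕ Fin q) ℝ)
    (hSigSymm : Sigᵀ = Sig) (hSigPD : Sig.PosDef)
    (hbbPD : (Sig.toBlocks₂₂).PosDef)
    (hLyap : L * Sig + Sig * Lᵀ = (2 : ℝ) • (1 : Matrix (Fin 2 ⊕ Fin q) (Fin 2 ⊕ Fin q) ℝ))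
    (Scond Ptilde : Matrix (Fin 2) (Fin 2) ℝ)
    (hScond : Scond =
      Sig.toBlocks₁₁ - Sig.toBlocks₁₂ * (Sig.toBlocks₂₂)⁻¹ * (Sig.toBlocks₁₂)ᵀ)
    (hPtilde : Ptilde =
      L.toBlocks₁₁ + Sig.toBlocks₁₂ * (Sig.toBlocks₂₂)⁻¹ * ((Sig⁻¹).toBlocks₂₁ - L.toBlocks₂₁)) :
    Ptilde * Scond + Scond * Ptildeᵀ = (2 : ℝ) • (1 : Matrix (Fin 2) (Fin 2) ℝ) := by
  set A := Sig.toBlocks₁₁ with hAdef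
  set B := Sig.toBlocks₁₂ with hBdef
  set C := Sig.toBlocks₂₁ with hCdef
  set D := Sig.toBlocks₂₂ with hDdef
  set E := D⁻¹ with hEdef
  have hSigblk : Sig = fromBlocks A B C D := (fromBlocks_toBlocks Sig).symm
  -- symmetry of blocks
  have hsymmblk : fromBlocks Aᵀ Cᵀ Bᵀ Dᵀ = fromBlocks A B C D := by
    rw [← fromBlocks_transpose, ← hSigblk, hSigSymm, hSigblk]
  have hA : Aᵀ = A := by
    have := congrArg Matrix.toBlocks₁₁ hsymmblk
    simpa [toBlocks_fromBlocks₁₁] using this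
  have hD : Dᵀ = D := by
    have := congrArg Matrix.toBlocks₂₂ hsymmblk
    simpa [toBlocks_fromBlocks₂₂] using this
  have hC : C = Bᵀ := by
    have := congrArg Matrix.toBlocks₂₁ hsymmblk
    simpa [toBlocks_fromBlocks₂₁] using this.symm
  -- D invertible
  have hDdet : IsUnit D.det := hbbPD.det_pos.ne'.isUnit
  have hDE : D * E = 1 := Matrix.mul_nonsing_inv D hDdet
  have hED : E * D = 1 := Matrix.nonsing_inv_mul D hDdet
  have hE : Eᵀ = E := by
    rw [hEdef, Matrix.transpose_nonsing_inv, hD]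
  -- inverse block equations
  have hinv : Sig * Sig⁻¹ = 1 :=
    Matrix.mul_nonsing_inv Sig hSigPD.det_pos.ne'.isUnit
  set P11 := (Sig⁻¹).toBlocks₁₁ with hP11def
  set P21 := (Sig⁻¹).toBlocks₂₁ with hP21def
  have hPblk : Sig⁻¹ = fromBlocks P11 ((Sig⁻¹).toBlocks₁₂) P21 ((Sig⁻¹).toBlocks₂₂) :=
    (fromBlocks_toBlocks _).symm
  have hinv' : fromBlocks (A * P11 + B * P21)
        (A * ((Sig⁻¹).toBlocks₁₂) + B * ((Sig⁻¹).toBlocks₂₂))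
        (Bᵀ * P11 + D * P21)
        (Bᵀ * ((Sig⁻¹).toBlocks₁₂) + D * ((Sig⁻¹).toBlocks₂₂))
      = fromBlocks 1 0 0 1 := by
    rw [← fromBlocks_multiply, ← hC, ← hSigblk, ← hPblk, hinv, fromBlocks_one]
  have hinv11 : A * P11 + B * P21 = 1 := by
    have h := congrArg Matrix.toBlocks₁₁ hinv'
    simp only [toBlocks_fromBlocks₁₁] at h
    exact h
  have hinv21 : Bᵀ * P11 + D * P21 = 0 := by
    have h := congrArg Matrix.toBlocks₂₁ hinv'
    simp only [toBlocks_fromBlocks₂₁] at h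
    exact h
  have hBt : Bᵀ * P11 = -(D * P21) := by
    rw [eq_neg_iff_add_eq_zero]; exact hinv21
  have hP21eq : P21 = -(E * (Bᵀ * P11)) := by
    calc P21 = (E * D) * P21 := by rw [hED, Matrix.one_mul]
      _ = E * (D * P21) := by rw [Matrix.mul_assoc]
      _ = -(E * (Bᵀ * P11)) := by
          rw [← neg_neg (D * P21), ← hBt, Matrix.mul_neg]
  have hSP11 : Scond * P11 = 1 := by
    calc Scond * P11 = A * P11 - B * E * (Bᵀ * P11) := by
          rw [hScond, Matrix.sub_mul, Matrix.mul_assoc]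
      _ = A * P11 - B * E * -(D * P21) := by rw [hBt]
      _ = A * P11 + B * (E * (D * P21)) := by
          rw [Matrix.mul_neg, sub_neg_eq_add, Matrix.mul_assoc]
      _ = A * P11 + B * P21 := by
          rw [← Matrix.mul_assoc E D P21, hED, Matrix.one_mul]
      _ = 1 := hinv11
  have hP11S : P11 * Scond = 1 := mul_eq_one_comm.mp hSP11
  have hP : P21 * Scond = -(E * Bᵀ) := by
    rw [hP21eq]
    calc -(E * (Bᵀ * P11)) * Scond = -(E * (Bᵀ * (P11 * Scond))) := by
          simp only [Matrix.neg_mul, Matrix.mul_assoc]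
      _ = -(E * Bᵀ) := by rw [hP11S, Matrix.mul_one]
  -- Lyapunov block equations
  set La := L.toBlocks₁₁
  set Lb := L.toBlocks₁₂
  set Lc := L.toBlocks₂₁
  set Ld := L.toBlocks₂₂
  have hLblk : L = fromBlocks La Lb Lc Ld := (fromBlocks_toBlocks L).symm
  have hLyap' : fromBlocks
      (La * A + Lb * Bᵀ + (A * Laᵀ + B * Lbᵀ))
      (La * B + Lb * D + (A * Lcᵀ + B * Ldᵀ))
      (Lc * A + Ld * Bᵀ + (Bᵀ * Laᵀ + D * Lbᵀ))
      (Lc * B + Ld * D + (Bᵀ * Lcᵀ + D * Ldᵀ))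
      = fromBlocks ((2:ℝ) • 1) 0 0 ((2:ℝ) • 1) := by
    have hLT : Lᵀ = fromBlocks Laᵀ Lcᵀ Lbᵀ Ldᵀ := by
      rw [hLblk, fromBlocks_transpose]
    have h2one : (2:ℝ) • (1 : Matrix (Fin 2 ⊕ Fin q) (Fin 2 ⊕ Fin q) ℝ)
        = fromBlocks ((2:ℝ) • 1) 0 0 ((2:ℝ) • 1) := by
      rw [← fromBlocks_one, fromBlocks_smul]; simp only [smul_zero]
    calc fromBlocks _ _ _ _
        = fromBlocks La Lb Lc Ld * fromBlocks A B Bᵀ D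
          + fromBlocks A B Bᵀ D * fromBlocks Laᵀ Lcᵀ Lbᵀ Ldᵀ := by
          rw [fromBlocks_multiply, fromBlocks_multiply, fromBlocks_add]
      _ = L * Sig + Sig * Lᵀ := by rw [← hLT, ← hC, ← hSigblk, ← hLblk]
      _ = fromBlocks ((2:ℝ) • 1) 0 0 ((2:ℝ) • 1) := by rw [hLyap, h2one]
  have h1 : La * A + Lb * Bᵀ + A * Laᵀ + B * Lbᵀ = (2:ℝ) • (1 : Matrix (Fin 2) (Fin 2) ℝ) := by
    have := congrArg Matrix.toBlocks₁₁ hLyap'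
    simp only [toBlocks_fromBlocks₁₁] at this
    rw [add_assoc]; exact this
  have h2 : La * B + Lb * D + A * Lcᵀ + B * Ldᵀ = 0 := by
    have := congrArg Matrix.toBlocks₁₂ hLyap'
    simp only [toBlocks_fromBlocks₁₂] at this
    rw [add_assoc]; exact this
  have h4 : Lc * B + Ld * D + Bᵀ * Lcᵀ + D * Ldᵀ = (2:ℝ) • (1 : Matrix (Fin q) (Fin q) ℝ) := by
    have := congrArg Matrix.toBlocks₂₂ hLyap'
    simp only [toBlocks_fromBlocks₂₂] at this
    rw [add_assoc]; exact this
  have hScond' : Scond = A - B * E * Bᵀ := hScond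
  have hPtilde' : Ptilde = La + B * E * (P21 - Lc) := by
    rw [hPtilde, Matrix.mul_assoc]
  rw [hPtilde']
  exact aux_stmt4 A Scond La B Lb Lc P21 D Ld E hA hD hE hDE hED hScond' hP h1 h2 h4
end

section
/- (Theorem 3, pairwise scalar form.) Let Σ be a symmetric positive definite real p×p matrix (p ≥ 3), P = Σ⁻¹, and let L be a real p×p matrix satisfying L·Σ + Σ·Lᵀ = 2·I_p. Fix distinct indices j ≠ k and let c denote the set of remaining p−2 indices. Define the conditional variances σ_j := Σ_{j,j} − Σ_{j,c}·(Σ_{c,c})⁻¹·Σ_{c,j} and σ_k := Σ_{k,k} − Σ_{k,c}·(Σ_{c,c})⁻¹·Σ_{c,k}, the conditional covariance σ_{jk} := Σ_{j,k} − Σ_{j,c}·(Σ_{c,c})⁻¹·Σ_{c,k}, and the conditional expectations e_{jk} := L_{j,k} + Σ_{j,c}·(Σ_{c,c})⁻¹·(P_{c,k} − L_{c,k}) and e_{kj} := L_{k,j} + Σ_{k,c}·(Σ_{c,c})⁻¹·(P_{c,j} − L_{c,j}) (these are the conditional means E(Y_{j,k} | Y_{c,k} = P_{c,k}) and E(Y_{k,j}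 | Y_{c,j} = P_{c,j}) of Gaussian vectors Y_{·,i} ~ N(L_{·,i}, Σ)). Then e_{jk}·(σ_{jk}²/σ_j − σ_k) + e_{kj}·(σ_{jk}²/σ_k − σ_j) = σ_{jk}/σ_j + σ_{jk}/σ_k. -/
/-!
Write `c` for the conditioning coordinates, `D` for the others, `E` for the inclusion of `D`
into all coordinates, and let `A` be the matrix whose column `i ∈ D` is `e_i - Σ_cc⁻¹ Σ_{c,i}`
(the regression residual of coordinate `i` on `c`). Then `Σ A = E S`, where `S` is the Schur
complement of `Σ_cc`, i.e. the conditional covariance of the `D` coordinates. Hence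
`Aᵀ Σ A = S` and `Σ⁻¹ E S = A`, and the matrix of conditional means is
`N = Aᵀ L E + (Σ⁻¹)_DD - Aᵀ Σ⁻¹ E`. Sandwiching the Lyapunov equation between `Aᵀ` and `A`
gives `N S + S Nᵀ = 2 I`: the conditional means solve the Lyapunov equation of the conditional
covariance. For `D = {j, k}` the three entries of this `2 × 2` equation eliminate `N_jj` and
`N_kk` and leave the stated identity.
-/

open Matrix

namespace Matrix

variable {ι R : Type*} [DecidableEq ι] [CommRing R]

variable (R) in
def inclCompl (q : ι → Prop) : Matrix ι {i // ¬q i} R :=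
  (1 : Matrix ι ι R).submatrix id (↑)

theorem inclCompl_apply (q : ι → Prop) (m : ι) (d : {i // ¬q i}) :
    inclCompl R q m d = (1 : Matrix ι ι R) m d :=
  rfl

variable [Fintype ι]

theorem mul_one_submatrix {l m : Type*} (X : Matrix l ι R) (e : m → ι) :
    X * (1 : Matrix ι ι R).submatrix id e = X.submatrix id e := by
  simpa using mul_submatrix_one (Equiv.refl ι) e X

theorem mul_inclCompl {l : Type*} {q : ι → Prop} (X : Matrix l ι R) :
    X * inclCompl R q = X.submatrix id (↑) :=
  mul_one_submatrix X _

variable (q : ι → Prop) [DecidablePred q]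

noncomputable def regressionCoeff (Sig : Matrix ι ι R) : Matrix {i // q i} {i // ¬q i} R :=
  (Sig.toBlock q q)⁻¹ * Sig.toBlock q (¬q ·)

noncomputable def regressionResidual (Sig : Matrix ι ι R) : Matrix ι {i // ¬q i} R :=
  inclCompl R q -
    (1 : Matrix ι ι R).submatrix id ((↑) : {i // q i} → ι) * regressionCoeff q Sig

noncomputable def condCov (Sig : Matrix ι ι R) : Matrix {i // ¬q i} {i // ¬q i} R :=
  Sig.toBlock (¬q ·) (¬q ·) - Sig.toBlock (¬q ·) q * (Sig.toBlock q q)⁻¹ * Sig.toBlock q (¬q ·)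

/-- Entry `(i, l)` is `E(Y_{i,l} | Y_{c,l} = (Sig⁻¹)_{c,l})` for a Gaussian column
`Y_{·,l} ~ N(L_{·,l}, Sig)`, with `c` the coordinates satisfying `q`. -/
noncomputable def condMean (Sig L : Matrix ι ι R) : Matrix {i // ¬q i} {i // ¬q i} R :=
  L.toBlock (¬q ·) (¬q ·) +
    Sig.toBlock (¬q ·) q * (Sig.toBlock q q)⁻¹ * (Sig⁻¹ - L).toBlock q (¬q ·)

variable {q}

theorem mul_regressionResidual {l : Type*} (Sig : Matrix ι ι R) (X : Matrix l ι R) :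
    X * regressionResidual q Sig =
      X.submatrix id (↑) - X.submatrix id ((↑) : {i // q i} → ι) * regressionCoeff q Sig := by
  rw [regressionResidual, Matrix.mul_sub, ← Matrix.mul_assoc, mul_inclCompl, mul_one_submatrix]

theorem submatrix_regressionResidual (Sig : Matrix ι ι R) :
    (regressionResidual q Sig).submatrix ((↑) : {i // ¬q i} → ι) id = 1 := by
  ext a b
  have hne (c : {i // q i}) : (a : ι) ≠ c := fun h => a.2 (h ▸ c.2)
  simp [regressionResidual, inclCompl, one_apply, mul_apply, hne, Subtype.ext_iff]

theorem condCov_eq (Sig : Matrix ι ι R) :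
    condCov q Sig = Sig.toBlock (¬q ·) (¬q ·) - Sig.toBlock (¬q ·) q * regressionCoeff q Sig := by
  rw [condCov, regressionCoeff, Matrix.mul_assoc]

theorem toBlock_mul_regressionCoeff {Sig : Matrix ι ι R} (hcc : IsUnit (Sig.toBlock q q).det) :
    Sig.toBlock q q * regressionCoeff q Sig = Sig.toBlock q (¬q ·) :=
  mul_nonsing_inv_cancel_left _ _ hcc

theorem mul_regressionResidual_eq {Sig : Matrix ι ι R} (hcc : IsUnit (Sig.toBlock q q).det) :
    Sig * regressionResidual q Sig = inclCompl R q * condCov q Sig := by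
  rw [mul_regressionResidual]
  ext m i
  by_cases hm : q m
  · have hne (d : {i // ¬q i}) : m ≠ d := fun h => d.2 (h ▸ hm)
    have h := congrFun (congrFun (toBlock_mul_regressionCoeff hcc) ⟨m, hm⟩) i
    simp only [mul_apply, toBlock_apply] at h
    simp [mul_apply, inclCompl_apply, hne, h]
  · rw [mul_apply, Fintype.sum_eq_single ⟨m, hm⟩ fun d hd => by
      rw [inclCompl_apply, one_apply_ne fun h => hd (Subtype.ext h.symm), zero_mul]]
    simp [condCov_eq, mul_apply, inclCompl_apply]

theorem transpose_regressionResidual_mul {n : Type*} (Sig : Matrix ι ι R) (X : Matrix ι n R) :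
    (regressionResidual q Sig)ᵀ * X =
      X.submatrix (↑) id - (regressionCoeff q Sig)ᵀ * X.submatrix ((↑) : {i // q i} → ι) id := by
  apply transpose_injective
  rw [transpose_mul, transpose_transpose, mul_regressionResidual]
  simp only [transpose_sub, transpose_mul, transpose_transpose, transpose_submatrix]

theorem transpose_regressionCoeff {Sig : Matrix ι ι R} (hSym : Sigᵀ = Sig) :
    (regressionCoeff q Sig)ᵀ = Sig.toBlock (¬q ·) q * (Sig.toBlock q q)⁻¹ := by
  rw [regressionCoeff, transpose_mul, transpose_nonsing_inv]
  simp only [toBlock, transpose_submatrix, hSym]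

theorem transpose_regressionResidual_mul_inclCompl (Sig : Matrix ι ι R) :
    (regressionResidual q Sig)ᵀ * inclCompl R q = 1 := by
  rw [mul_inclCompl, ← transpose_submatrix, submatrix_regressionResidual, transpose_one]

theorem transpose_regressionResidual_mul_mul {Sig : Matrix ι ι R}
    (hcc : IsUnit (Sig.toBlock q q).det) :
    (regressionResidual q Sig)ᵀ * Sig * regressionResidual q Sig = condCov q Sig := by
  rw [Matrix.mul_assoc, mul_regressionResidual_eq hcc, ← Matrix.mul_assoc,
    transpose_regressionResidual_mul_inclCompl, Matrix.one_mul]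

theorem transpose_condCov {Sig : Matrix ι ι R} (hSym : Sigᵀ = Sig)
    (hcc : IsUnit (Sig.toBlock q q).det) : (condCov q Sig)ᵀ = condCov q Sig := by
  rw [← transpose_regressionResidual_mul_mul hcc]
  simp only [transpose_mul, transpose_transpose, hSym, Matrix.mul_assoc]

theorem condMean_eq {Sig : Matrix ι ι R} (hSym : Sigᵀ = Sig) (L : Matrix ι ι R) :
    condMean q Sig L =
      (regressionResidual q Sig)ᵀ * L * inclCompl R q +
        Sig⁻¹.toBlock (¬q ·) (¬q ·) -
          (regressionResidual q Sig)ᵀ * Sig⁻¹ * inclCompl R q := by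
  rw [Matrix.mul_assoc, Matrix.mul_assoc, mul_inclCompl, mul_inclCompl,
    transpose_regressionResidual_mul, transpose_regressionResidual_mul,
    transpose_regressionCoeff hSym, condMean,
    show (Sig⁻¹ - L).toBlock q (¬q ·) = Sig⁻¹.toBlock q (¬q ·) - L.toBlock q (¬q ·) from rfl,
    Matrix.mul_sub]
  simp only [toBlock, submatrix_submatrix, Function.comp_id, Function.id_comp]
  abel

theorem inv_mul_inclCompl_mul_condCov {Sig : Matrix ι ι R} (hSig : IsUnit Sig.det)
    (hcc : IsUnit (Sig.toBlock q q).det) :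
    Sig⁻¹ * inclCompl R q * condCov q Sig = regressionResidual q Sig := by
  rw [Matrix.mul_assoc, ← mul_regressionResidual_eq hcc, ← Matrix.mul_assoc,
    nonsing_inv_mul _ hSig, Matrix.one_mul]

theorem toBlock_inv_mul_condCov {Sig : Matrix ι ι R} (hSig : IsUnit Sig.det)
    (hcc : IsUnit (Sig.toBlock q q).det) :
    Sig⁻¹.toBlock (¬q ·) (¬q ·) * condCov q Sig = 1 := by
  have hQ : Sig⁻¹.toBlock (¬q ·) (¬q ·) =
      (Sig⁻¹ * inclCompl R q).submatrix (↑) id := by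
    rw [mul_inclCompl, submatrix_submatrix]
    rfl
  rw [hQ, ← submatrix_id_id (condCov q Sig), ← submatrix_mul _ _ _ _ _ Function.bijective_id,
    inv_mul_inclCompl_mul_condCov hSig hcc, submatrix_regressionResidual]

theorem lyapunov_sandwich_regressionResidual {Sig L : Matrix ι ι R} (hSym : Sigᵀ = Sig)
    (hcc : IsUnit (Sig.toBlock q q).det) (hL : L * Sig + Sig * Lᵀ = (2 : R) • 1) :
    (regressionResidual q Sig)ᵀ * L * inclCompl R q * condCov q Sig +
        condCov q Sig * ((regressionResidual q Sig)ᵀ * L * inclCompl R q)ᵀ =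
      (2 : R) • ((regressionResidual q Sig)ᵀ * regressionResidual q Sig) := by
  set A := regressionResidual q Sig
  have hSA : Sig * A = inclCompl R q * condCov q Sig := mul_regressionResidual_eq hcc
  have hAS : Aᵀ * Sig = condCov q Sig * (inclCompl R q)ᵀ := by
    simpa only [transpose_mul, hSym, transpose_condCov hSym hcc] using congrArg transpose hSA
  calc Aᵀ * L * inclCompl R q * condCov q Sig + condCov q Sig * (Aᵀ * L * inclCompl R q)ᵀ
      = Aᵀ * (L * Sig + Sig * Lᵀ) * A := by
        simp only [Matrix.mul_add, Matrix.add_mul, transpose_mul, transpose_transpose,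
          Matrix.mul_assoc, hSA]
        rw [← Matrix.mul_assoc Aᵀ Sig, hAS]
        simp only [Matrix.mul_assoc]
    _ = (2 : R) • (Aᵀ * A) := by rw [hL, Matrix.mul_smul, Matrix.mul_one, Matrix.smul_mul]

theorem condMean_mul_condCov_add {Sig L : Matrix ι ι R} (hSym : Sigᵀ = Sig)
    (hSig : IsUnit Sig.det) (hcc : IsUnit (Sig.toBlock q q).det)
    (hL : L * Sig + Sig * Lᵀ = (2 : R) • 1) :
    condMean q Sig L * condCov q Sig + condCov q Sig * (condMean q Sig L)ᵀ = (2 : R) • 1 := by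
  have hN := condMean_eq (q := q) hSym L
  have hPES := inv_mul_inclCompl_mul_condCov hSig hcc
  have hQS := toBlock_inv_mul_condCov hSig hcc
  have hLyap := lyapunov_sandwich_regressionResidual hSym hcc hL
  have hST := transpose_condCov hSym hcc
  set N := condMean q Sig L
  set A := regressionResidual q Sig
  set S := condCov q Sig
  set M := Aᵀ * L * inclCompl R q
  have hNS : N * S = M * S + 1 - Aᵀ * A := by
    rw [hN, Matrix.sub_mul, Matrix.add_mul, hQS]
    simp only [Matrix.mul_assoc] at hPES ⊢
    rw [hPES]
  calc N * S + S * Nᵀ = N * S + (N * S)ᵀ := by rw [transpose_mul, hST]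
    _ = M * S + S * Mᵀ + (2 : R) • (1 - Aᵀ * A) := by
      rw [hNS]
      simp only [transpose_sub, transpose_add, transpose_mul, transpose_one, transpose_transpose,
        hST]
      module
    _ = (2 : R) • 1 := by rw [hLyap, smul_sub, add_sub_cancel]

theorem condCov_apply (Sig : Matrix ι ι R) (x y : {i // ¬q i}) :
    condCov q Sig x y = Sig x y -
      (fun a : {i // q i} => Sig x a) ⬝ᵥ ((Sig.toBlock q q)⁻¹ *ᵥ fun a => Sig a y) := by
  rw [condCov, sub_apply, Matrix.mul_assoc]
  rfl

theorem condMean_apply (Sig L : Matrix ι ι R) (x y : {i // ¬q i}) :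
    condMean q Sig L x y = L x y +
      (fun a : {i // q i} => Sig x a) ⬝ᵥ ((Sig.toBlock q q)⁻¹ *ᵥ fun a => Sig⁻¹ a y - L a y) := by
  rw [condMean, add_apply, Matrix.mul_assoc]
  rfl

theorem PosDef.isUnit_det_toBlock {Sig : Matrix ι ι ℝ} (hSig : Sig.PosDef) :
    IsUnit (Sig.toBlock q q).det :=
  (isUnit_iff_isUnit_det _).mp (hSig.submatrix Subtype.val_injective).isUnit

theorem posDef_condCov {Sig : Matrix ι ι ℝ} (hSig : Sig.PosDef) : (condCov q Sig).PosDef := by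
  rw [← transpose_regressionResidual_mul_mul hSig.isUnit_det_toBlock,
    ← conjTranspose_eq_transpose_of_trivial]
  refine hSig.conjTranspose_mul_mul_same fun v w h => ?_
  have hrestrict (u : {i // ¬q i} → ℝ) :
      u = fun d : {i // ¬q i} => (regressionResidual q Sig *ᵥ u) d := by
    conv_lhs => rw [← one_mulVec u, ← submatrix_regressionResidual (q := q) Sig]
    rfl
  rw [hrestrict v, hrestrict w, h]

theorem pairwise_of_mul_add_mul_transpose {κ K : Type*} [Fintype κ] [DecidableEq κ]
    [Field K] [CharZero K] {N S : Matrix κ κ K} (hST : Sᵀ = S)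
    (hNS : N * S + S * Nᵀ = (2 : K) • 1) {x y : κ} (hxy : x ≠ y) (hκ : ∀ z, z = x ∨ z = y)
    (hx : S x x ≠ 0) (hy : S y y ≠ 0) :
    N x y * (S x y ^ 2 / S x x - S y y) + N y x * (S x y ^ 2 / S y y - S x x) =
      S x y / S x x + S x y / S y y := by
  have hsum (f : κ → K) : ∑ z, f z = f x + f y :=
    Fintype.sum_eq_add x y hxy fun z hz => ((hκ z).elim hz.1 hz.2).elim
  have entry (u v : κ) := congrFun (congrFun hNS u) v
  simp only [Matrix.add_apply, mul_apply, transpose_apply, Matrix.smul_apply, hsum] at entry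
  have hyx : S y x = S x y := congrFun (congrFun hST x) y
  have hxx := entry x x
  have hxy' := entry x y
  have hyy := entry y y
  simp only [hyx, one_apply_eq, one_apply_ne hxy, smul_eq_mul, mul_one, mul_zero] at hxx hxy' hyy
  field_simp
  linear_combination (S x y * S y y / 2) * hxx - S x x * S y y * hxy' + (S x x * S x y / 2) * hyy

end Matrix

theorem stmt_5_general (p : ℕ) (Sig L : Matrix (Fin p) (Fin p) ℝ)
    (hSigSymm : Sigᵀ = Sig) (hSigPD : Sig.PosDef)
    (hLyap : L * Sig + Sig * Lᵀ = (2 : ℝ) • (1 : Matrix (Fin p) (Fin p) ℝ))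
    (j k : Fin p) (hjk : j ≠ k)
    (Scc : Matrix {i : Fin p // i ≠ j ∧ i ≠ k} {i : Fin p // i ≠ j ∧ i ≠ k} ℝ)
    (hScc : ∀ a b : {i : Fin p // i ≠ j ∧ i ≠ k}, Scc a b = Sig (a : Fin p) (b : Fin p))
    (σj σk σjk ejk ekj : ℝ)
    (hσj : σj = Sig j j -
      (fun a : {i : Fin p // i ≠ j ∧ i ≠ k} => Sig j (a : Fin p)) ⬝ᵥ
        (Scc⁻¹ *ᵥ fun a : {i : Fin p // i ≠ j ∧ i ≠ k} => Sig (a : Fin p) j))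
    (hσk : σk = Sig k k -
      (fun a : {i : Fin p // i ≠ j ∧ i ≠ k} => Sig k (a : Fin p)) ⬝ᵥ
        (Scc⁻¹ *ᵥ fun a : {i : Fin p // i ≠ j ∧ i ≠ k} => Sig (a : Fin p) k))
    (hσjk : σjk = Sig j k -
      (fun a : {i : Fin p // i ≠ j ∧ i ≠ k} => Sig j (a : Fin p)) ⬝ᵥ
        (Scc⁻¹ *ᵥ fun a : {i : Fin p // i ≠ j ∧ i ≠ k} => Sig (a : Fin p) k))
    (hejk : ejk = L j k +
      (fun a : {i : Fin p // i ≠ j ∧ i ≠ k} => Sig j (a : Fin p)) ⬝ᵥ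
        (Scc⁻¹ *ᵥ fun a : {i : Fin p // i ≠ j ∧ i ≠ k} =>
          (Sig⁻¹) (a : Fin p) k - L (a : Fin p) k))
    (hekj : ekj = L k j +
      (fun a : {i : Fin p // i ≠ j ∧ i ≠ k} => Sig k (a : Fin p)) ⬝ᵥ
        (Scc⁻¹ *ᵥ fun a : {i : Fin p // i ≠ j ∧ i ≠ k} =>
          (Sig⁻¹) (a : Fin p) j - L (a : Fin p) j)) :
    ejk * (σjk ^ 2 / σj - σk) + ekj * (σjk ^ 2 / σk - σj) = σjk / σj + σjk / σk := by
  obtain rfl : Scc = Sig.toBlock _ _ := Matrix.ext hScc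
  have hcc := hSigPD.isUnit_det_toBlock (q := fun i => i ≠ j ∧ i ≠ k)
  have hS := posDef_condCov (q := fun i => i ≠ j ∧ i ≠ k) hSigPD
  have hN :=
    condMean_mul_condCov_add hSigSymm ((isUnit_iff_isUnit_det _).mp hSigPD.isUnit) hcc hLyap
  let jD : {i // ¬(i ≠ j ∧ i ≠ k)} := ⟨j, fun h => h.1 rfl⟩
  let kD : {i // ¬(i ≠ j ∧ i ≠ k)} := ⟨k, fun h => h.2 rfl⟩
  have hD (z : {i // ¬(i ≠ j ∧ i ≠ k)}) : z = jD ∨ z = kD := by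
    by_contra! h
    exact z.2 ⟨fun e => h.1 (Subtype.ext e), fun e => h.2 (Subtype.ext e)⟩
  rw [hσj, hσk, hσjk, hejk, hekj, ← condCov_apply Sig jD jD, ← condCov_apply Sig kD kD,
    ← condCov_apply Sig jD kD, ← condMean_apply Sig L jD kD, ← condMean_apply Sig L kD jD]
  exact pairwise_of_mul_add_mul_transpose (transpose_condCov hSigSymm hcc) hN
    (fun h => hjk (congrArg Subtype.val h)) hD hS.diag_pos.ne' hS.diag_pos.ne'

/-- Theorem 3, pairwise scalar form. `Sig` is symmetric positive definite (`p ≥ 3`),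
`P = Sig⁻¹`, and `L` satisfies the Lyapunov equation. For distinct indices `j ≠ k` with
`c` the remaining indices (the subtype `{i // i ≠ j ∧ i ≠ k}`), the conditional variances
`σj, σk`, conditional covariance `σjk`, and conditional expectations `ejk, ekj` satisfy
`ejk * (σjk²/σj - σk) + ekj * (σjk²/σk - σj) = σjk/σj + σjk/σk`. -/
theorem stmt_5 (p : ℕ) (hp : 3 ≤ p) (Sig L : Matrix (Fin p) (Fin p) ℝ)
    (hSigSymm : Sigᵀ = Sig) (hSigPD : Sig.PosDef)
    (hLyap : L * Sig + Sig * Lᵀ = (2 : ℝ) • (1 : Matrix (Fin p) (Fin p) ℝ))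
    (j k : Fin p) (hjk : j ≠ k)
    (Scc : Matrix {i : Fin p // i ≠ j ∧ i ≠ k} {i : Fin p // i ≠ j ∧ i ≠ k} ℝ)
    (hScc : ∀ a b : {i : Fin p // i ≠ j ∧ i ≠ k}, Scc a b = Sig (a : Fin p) (b : Fin p))
    (σj σk σjk ejk ekj : ℝ)
    (hσj : σj = Sig j j -
      (fun a : {i : Fin p // i ≠ j ∧ i ≠ k} => Sig j (a : Fin p)) ⬝ᵥ
        (Scc⁻¹ *ᵥ fun a : {i : Fin p // i ≠ j ∧ i ≠ k} => Sig (a : Fin p) j))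
    (hσk : σk = Sig k k -
      (fun a : {i : Fin p // i ≠ j ∧ i ≠ k} => Sig k (a : Fin p)) ⬝ᵥ
        (Scc⁻¹ *ᵥ fun a : {i : Fin p // i ≠ j ∧ i ≠ k} => Sig (a : Fin p) k))
    (hσjk : σjk = Sig j k -
      (fun a : {i : Fin p // i ≠ j ∧ i ≠ k} => Sig j (a : Fin p)) ⬝ᵥ
        (Scc⁻¹ *ᵥ fun a : {i : Fin p // i ≠ j ∧ i ≠ k} => Sig (a : Fin p) k))
    (hejk : ejk = L j k +
      (fun a : {i : Fin p // i ≠ j ∧ i ≠ k} => Sig j (a : Fin p)) ⬝ᵥ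
        (Scc⁻¹ *ᵥ fun a : {i : Fin p // i ≠ j ∧ i ≠ k} =>
          (Sig⁻¹) (a : Fin p) k - L (a : Fin p) k))
    (hekj : ekj = L k j +
      (fun a : {i : Fin p // i ≠ j ∧ i ≠ k} => Sig k (a : Fin p)) ⬝ᵥ
        (Scc⁻¹ *ᵥ fun a : {i : Fin p // i ≠ j ∧ i ≠ k} =>
          (Sig⁻¹) (a : Fin p) j - L (a : Fin p) j)) :
    ejk * (σjk ^ 2 / σj - σk) + ekj * (σjk ^ 2 / σk - σj) = σjk / σj + σjk / σk :=
  stmt_5_general p Sig L hSigSymm hSigPD hLyap j k hjk Scc hScc σj σk σjk ejk ekj hσj hσk hσjk hejk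
    hekj
end

section
/- (2×2 algebraic core of Theorem 3.) Let S ∈ ℝ^{2×2} be symmetric with S₁₁ ≠ 0 and S₂₂ ≠ 0, and let M ∈ ℝ^{2×2} satisfy M·S + S·Mᵀ = 2·I_2. Then M₁₂·(S₁₂²/S₁₁ − S₂₂) + M₂₁·(S₁₂²/S₂₂ − S₁₁) = S₁₂/S₁₁ + S₁₂/S₂₂. -/
open Matrix

/-- 2×2 algebraic core of Theorem 3: if `S` is symmetric with nonzero diagonal and
`M * S + S * Mᵀ = 2 • I₂`, then
`M₀₁ * (S₀₁²/S₀₀ - S₁₁) + M₁₀ * (S₀₁²/S₁₁ - S₀₀) = S₀₁/S₀₀ + S₀₁/S₁₁`. -/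
theorem stmt_6 (S M : Matrix (Fin 2) (Fin 2) ℝ)
    (hSsymm : Sᵀ = S) (h11 : S 0 0 ≠ 0) (h22 : S 1 1 ≠ 0)
    (hLyap : M * S + S * Mᵀ = (2 : ℝ) • (1 : Matrix (Fin 2) (Fin 2) ℝ)) :
    M 0 1 * ((S 0 1) ^ 2 / S 0 0 - S 1 1) + M 1 0 * ((S 0 1) ^ 2 / S 1 1 - S 0 0)
      = S 0 1 / S 0 0 + S 0 1 / S 1 1 := by
  have hs := congrFun (congrFun hSsymm 1) 0
  simp [Matrix.transpose_apply] at hs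
  have e00 := congrFun (congrFun hLyap 0) 0
  have e01 := congrFun (congrFun hLyap 0) 1
  have e10 := congrFun (congrFun hLyap 1) 0
  have e11 := congrFun (congrFun hLyap 1) 1
  simp [Matrix.mul_apply, Fin.sum_univ_two, Matrix.transpose_apply, Matrix.one_apply,
    Matrix.smul_apply, hs] at e00 e01 e10 e11
  rw [hs]
  field_simp
  linear_combination (S 1 0 * S 1 1 / 2) * e00 + (S 1 0 * S 0 0 / 2) * e11
    - S 0 0 * S 1 1 * e01
end

section
/- (Identity (23) underlying the GGIM off-diagonal LASSO constraints.) Let S ∈ ℝ^{p×p} be symmetric with all diagonal entries nonzero, and let L ∈ ℝ^{p×p} satisfy L·S + S·Lᵀ = 2·I_p. Then for every pair of distinct indices j ≠ k: ∑_{i≠j} L_{j,i}·(S_{j,k}·S_{j,i}/S_{j,j} − S_{k,i}) + ∑_{l≠k} L_{k,l}·(S_{j,k}·S_{k,l}/S_{k,k} − S_{j,l}) = S_{j,k}/S_{j,j} + S_{j,k}/S_{k,k}. -/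
open Matrix

/-- Identity (23) underlying the GGIM off-diagonal LASSO constraints: if `S` is symmetric
with nonzero diagonal entries and `L * S + S * Lᵀ = 2 • I`, then for all `j ≠ k`,
`∑_{i≠j} L j i * (S j k * S j i / S j j - S k i)
  + ∑_{l≠k} L k l * (S j k * S k l / S k k - S j l) = S j k / S j j + S j k / S k k`. -/
theorem stmt_8 (p : ℕ) (S L : Matrix (Fin p) (Fin p) ℝ)
    (hSsymm : Sᵀ = S) (hdiag : ∀ i, S i i ≠ 0)
    (hLyap : L * S + S * Lᵀ = (2 : ℝ) • (1 : Matrix (Fin p) (Fin p) ℝ)) :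
    ∀ j k : Fin p, j ≠ k →
      (∑ i ∈ Finset.univ.erase j, L j i * (S j k * S j i / S j j - S k i)) +
      (∑ l ∈ Finset.univ.erase k, L k l * (S j k * S k l / S k k - S j l))
        = S j k / S j j + S j k / S k k := by
  intro j k hjk
  have hS : ∀ a b, S a b = S b a := by
    intro a b
    have := congrFun (congrFun hSsymm b) a
    simpa [Matrix.transpose_apply] using this
  have hent : ∀ a b : Fin p,
      (∑ i, L a i * S i b) + (∑ i, L b i * S i a)
        = (2 : ℝ) * (if a = b then 1 else 0) := by
    intro a b
    have := congrFun (congrFun hLyap a) b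
    simp only [Matrix.add_apply, Matrix.mul_apply, Matrix.transpose_apply,
      Matrix.smul_apply, Matrix.one_apply, smul_eq_mul] at this
    have h2 : ∑ i, S a i * L b i = ∑ i, L b i * S i a := by
      apply Finset.sum_congr rfl
      intro i _
      rw [hS a i]; ring
    rw [← h2]; exact this
  have hjj : (∑ i, L j i * S i j) = 1 := by
    have := hent j j
    simp at this; linarith
  have hkk : (∑ i, L k i * S i k) = 1 := by
    have := hent k k
    simp at this; linarith
  have hoff : (∑ i, L j i * S i k) + (∑ i, L k i * S i j) = 0 := by
    have := hent j k
    simp [hjk] at this; linarith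
  have hz1 : L j j * (S j k * S j j / S j j - S k j) = 0 := by
    rw [mul_div_assoc, div_self (hdiag j), mul_one, hS k j, sub_self, mul_zero]
  have hz2 : L k k * (S j k * S k k / S k k - S j k) = 0 := by
    rw [mul_div_assoc, div_self (hdiag k), mul_one, sub_self, mul_zero]
  rw [Finset.sum_erase (f := fun i => L j i * (S j k * S j i / S j j - S k i)) _ hz1,
      Finset.sum_erase (f := fun l => L k l * (S j k * S k l / S k k - S j l)) _ hz2]
  have e1 : (∑ i, L j i * (S j k * S j i / S j j - S k i))
      = S j k / S j j * (∑ i, L j i * S i j) - ∑ i, L j i * S i k := by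
    rw [Finset.mul_sum, ← Finset.sum_sub_distrib]
    apply Finset.sum_congr rfl
    intro i _
    rw [hS j i, hS k i]; ring
  have e2 : (∑ l, L k l * (S j k * S k l / S k k - S j l))
      = S j k / S k k * (∑ i, L k i * S i k) - ∑ i, L k i * S i j := by
    rw [Finset.mul_sum, ← Finset.sum_sub_distrib]
    apply Finset.sum_congr rfl
    intro i _
    rw [hS k i, hS j i]; ring
  rw [e1, e2, hjj, hkk]
  linarith
end

section
/- (Theorem 5.) Let L̂, S, Σ̂, C ∈ ℝ^{p×p} satisfy L̂·S + S·L̂ᵀ = 2·I_p + C and L̂·Σ̂ + Σ̂·L̂ᵀ = 2·I_p. Let K be the real matrix indexed by pairs (i,j), (k,l) ∈ {1,…,p}² with entries K_{(i,j),(k,l)} = L̂_{i,k}·δ_{j,l} + L̂_{j,l}·δ_{i,k} (so that K represents the linear map X ↦ L̂·X + X·L̂ᵀ on entries), and suppose K is strictly diagonally dominant with α := min_{(i,j)} ( |K_{(i,j),(i,j)}| − ∑_{(k,l)≠(i,j)} |K_{(i,j),(k,l)}| ) > 0. Let ξ := ( ∑_{i,j} C_{i,j}² )^{1/2} be the Frobenius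 norm of C. Then max_{i,j} |Σ̂_{i,j} − S_{i,j}| ≤ ξ/α. -/
open Matrix

/-- Theorem 5: if `Lhat * S + S * Lhatᵀ = 2 • I + C`, `Lhat * Shat + Shat * Lhatᵀ = 2 • I`,
the Kronecker-sum matrix `K` of `Lhat` (representing `X ↦ Lhat * X + X * Lhatᵀ`) is
strictly diagonally dominant with minimal gap `α > 0`, and `ξ` is the Frobenius norm of
`C`, then `max_{i,j} |Shat i j - S i j| ≤ ξ / α`. -/
theorem stmt_10 (p : ℕ) (hp : 0 < p)
    (Lhat S Shat C : Matrix (Fin p) (Fin p) ℝ)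
    (h1 : Lhat * S + S * Lhatᵀ = (2 : ℝ) • (1 : Matrix (Fin p) (Fin p) ℝ) + C)
    (h2 : Lhat * Shat + Shat * Lhatᵀ = (2 : ℝ) • (1 : Matrix (Fin p) (Fin p) ℝ))
    (K : Matrix (Fin p × Fin p) (Fin p × Fin p) ℝ)
    (hK : ∀ i j k l : Fin p, K (i, j) (k, l) =
      Lhat i k * (if j = l then 1 else 0) + Lhat j l * (if i = k then 1 else 0))
    (α : ℝ) (hαpos : 0 < α)
    (hα : α = Finset.univ.inf'
      (Finset.univ_nonempty_iff.mpr ⟨(⟨0, hp⟩, ⟨0, hp⟩)⟩)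
      (fun q : Fin p × Fin p => |K q q| - ∑ r ∈ Finset.univ.erase q, |K q r|))
    (ξ : ℝ) (hξ : ξ = Real.sqrt (∑ i, ∑ j, (C i j) ^ 2)) :
    ∀ i j : Fin p, |Shat i j - S i j| ≤ ξ / α := by
  set D : Matrix (Fin p) (Fin p) ℝ := Shat - S with hD
  have h3 : Lhat * D + D * Lhatᵀ = -C := by
    have e : Lhat * D + D * Lhatᵀ
        = (Lhat * Shat + Shat * Lhatᵀ) - (Lhat * S + S * Lhatᵀ) := by
      rw [hD, Matrix.mul_sub, Matrix.sub_mul]; abel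
    rw [e, h1, h2]; abel
  -- vectorized equation
  have hEq : ∀ a b : Fin p, ∑ r : Fin p × Fin p, K (a, b) r * D r.1 r.2 = -C a b := by
    intro a b
    have key : ∑ r : Fin p × Fin p, K (a, b) r * D r.1 r.2
        = (Lhat * D) a b + (D * Lhatᵀ) a b := by
      rw [Fintype.sum_prod_type]
      simp only [hK, add_mul, ite_mul, one_mul, zero_mul, mul_ite, mul_zero,
        Finset.sum_add_distrib, Matrix.mul_apply, Matrix.transpose_apply]
      congr 1
      · rw [Finset.sum_comm]
        simp
      · simp [mul_comm]
    rw [key]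
    have := congrFun (congrFun h3 a) b
    simpa using this
  -- bound on C entries
  have hCle : ∀ a b : Fin p, |C a b| ≤ ξ := by
    intro a b
    rw [hξ]
    have h0 : |C a b| = Real.sqrt ((C a b) ^ 2) := by
      rw [Real.sqrt_sq_eq_abs]
    rw [h0]
    apply Real.sqrt_le_sqrt
    have h1' : (C a b) ^ 2 ≤ ∑ j, (C a j) ^ 2 :=
      Finset.single_le_sum (f := fun j => (C a j) ^ 2) (fun j _ => sq_nonneg _)
        (Finset.mem_univ b)
    refine h1'.trans ?_
    exact Finset.single_le_sum (f := fun i => ∑ j, (C i j) ^ 2)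
      (fun i _ => Finset.sum_nonneg fun j _ => sq_nonneg _) (Finset.mem_univ a)
  -- pick maximizing index
  obtain ⟨q, -, hq⟩ := Finset.exists_max_image (Finset.univ : Finset (Fin p × Fin p))
    (fun r => |D r.1 r.2|) (Finset.univ_nonempty_iff.mpr ⟨(⟨0, hp⟩, ⟨0, hp⟩)⟩)
  have hqmax : ∀ r : Fin p × Fin p, |D r.1 r.2| ≤ |D q.1 q.2| :=
    fun r => hq r (Finset.mem_univ r)
  -- α ≤ gap at q
  have hαq : α ≤ |K q q| - ∑ r ∈ Finset.univ.erase q, |K q r| := by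
    rw [hα]
    exact Finset.inf'_le _ (Finset.mem_univ q)
  -- main estimate: α * |D q| ≤ |C q|
  have hmain : α * |D q.1 q.2| ≤ |C q.1 q.2| := by
    have hsum := hEq q.1 q.2
    simp only [Prod.mk.eta] at hsum
    have hsplit : K q q * D q.1 q.2 + ∑ r ∈ Finset.univ.erase q, K q r * D r.1 r.2
        = -C q.1 q.2 := by
      rw [← hsum]
      exact Finset.add_sum_erase Finset.univ (fun r => K q r * D r.1 r.2)
        (Finset.mem_univ q)
    have h4 : |K q q * D q.1 q.2| - |∑ r ∈ Finset.univ.erase q, K q r * D r.1 r.2|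
        ≤ |C q.1 q.2| := by
      have := abs_sub_abs_le_abs_sub (K q q * D q.1 q.2)
        (-(∑ r ∈ Finset.univ.erase q, K q r * D r.1 r.2))
      rw [abs_neg, sub_neg_eq_add, hsplit, abs_neg] at this
      exact this
    have h5 : |∑ r ∈ Finset.univ.erase q, K q r * D r.1 r.2|
        ≤ (∑ r ∈ Finset.univ.erase q, |K q r|) * |D q.1 q.2| := by
      calc |∑ r ∈ Finset.univ.erase q, K q r * D r.1 r.2|
          ≤ ∑ r ∈ Finset.univ.erase q, |K q r * D r.1 r.2| :=
            Finset.abs_sum_le_sum_abs _ _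
        _ ≤ ∑ r ∈ Finset.univ.erase q, |K q r| * |D q.1 q.2| := by
            apply Finset.sum_le_sum
            intro r _
            rw [abs_mul]
            exact mul_le_mul_of_nonneg_left (hqmax r) (abs_nonneg _)
        _ = (∑ r ∈ Finset.univ.erase q, |K q r|) * |D q.1 q.2| := by
            rw [Finset.sum_mul]
    calc α * |D q.1 q.2|
        ≤ (|K q q| - ∑ r ∈ Finset.univ.erase q, |K q r|) * |D q.1 q.2| :=
          mul_le_mul_of_nonneg_right hαq (abs_nonneg _)
      _ = |K q q| * |D q.1 q.2| - (∑ r ∈ Finset.univ.erase q, |K q r|) * |D q.1 q.2| := by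
          ring
      _ ≤ |K q q * D q.1 q.2| - |∑ r ∈ Finset.univ.erase q, K q r * D r.1 r.2| := by
          rw [abs_mul]
          linarith [h5]
      _ ≤ |C q.1 q.2| := h4
  intro i j
  have hij : |D i j| ≤ |D q.1 q.2| := hqmax (i, j)
  have : Shat i j - S i j = D i j := by simp [hD]
  rw [this]
  rw [le_div_iff₀ hαpos]
  calc |D i j| * α ≤ |D q.1 q.2| * α := mul_le_mul_of_nonneg_right hij hαpos.le
    _ = α * |D q.1 q.2| := mul_comm _ _
    _ ≤ |C q.1 q.2| := hmain
    _ ≤ ξ := hCle q.1 q.2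
end

section
/- (Corollary 6.) Under the hypotheses of Theorem 5 (L̂·S + S·L̂ᵀ = 2·I_p + C, L̂·Σ̂ + Σ̂·L̂ᵀ = 2·I_p, the Kronecker-sum matrix K of L̂ strictly diagonally dominant with gap α > 0, ξ the Frobenius norm of C), suppose additionally that Σ̃ ∈ ℝ^{p×p} satisfies Σ̃ = S + Ũ for some Ũ with max_{i,j} |Ũ_{i,j}| ≤ λ (as holds for the l1-penalized maximum likelihood covariance estimate with penalty λ). Then max_{i,j} |Σ̃_{i,j} − Σ̂_{i,j}| ≤ ξ/α + λ. -/
open Matrix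

/-- Strictly diagonally dominant bound: if `K.mulVec x = c` and every row has gap at least
`α > 0`, then `|x q| ≤ M / α` whenever `|c q| ≤ M` for all `q`. -/
lemma sdd_bound {n : Type*} [Fintype n] [Nonempty n] [DecidableEq n]
    (K : Matrix n n ℝ) (x c : n → ℝ) (hmul : K.mulVec x = c)
    (α : ℝ) (hαpos : 0 < α)
    (hα : ∀ q, α ≤ |K q q| - ∑ r ∈ Finset.univ.erase q, |K q r|)
    (M : ℝ) (hM : ∀ q, |c q| ≤ M) : ∀ q, |x q| ≤ M / α := by
  obtain ⟨q, -, hq⟩ := Finset.exists_max_image Finset.univ (fun q => |x q|)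
    ⟨Classical.arbitrary n, Finset.mem_univ _⟩
  have key : α * |x q| ≤ M := by
    have hcq : c q = K q q * x q + ∑ r ∈ Finset.univ.erase q, K q r * x r := by
      rw [← hmul]
      simp only [Matrix.mulVec, dotProduct]
      rw [← Finset.add_sum_erase _ _ (Finset.mem_univ q)]
    have h1 : |K q q * x q| ≤ |c q| + ∑ r ∈ Finset.univ.erase q, |K q r| * |x r| := by
      have : K q q * x q = c q - ∑ r ∈ Finset.univ.erase q, K q r * x r := by
        rw [hcq]; ring
      rw [this]
      calc |c q - ∑ r ∈ Finset.univ.erase q, K q r * x r|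
          ≤ |c q| + |∑ r ∈ Finset.univ.erase q, K q r * x r| := abs_sub _ _
        _ ≤ |c q| + ∑ r ∈ Finset.univ.erase q, |K q r * x r| := by
            gcongr; exact Finset.abs_sum_le_sum_abs _ _
        _ = |c q| + ∑ r ∈ Finset.univ.erase q, |K q r| * |x r| := by
            simp [abs_mul]
    have h2 : ∑ r ∈ Finset.univ.erase q, |K q r| * |x r|
        ≤ (∑ r ∈ Finset.univ.erase q, |K q r|) * |x q| := by
      rw [Finset.sum_mul]
      apply Finset.sum_le_sum
      intro r _
      exact mul_le_mul_of_nonneg_left (hq r (Finset.mem_univ r)) (abs_nonneg _)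
    have h3 : (|K q q| - ∑ r ∈ Finset.univ.erase q, |K q r|) * |x q| ≤ |c q| := by
      rw [abs_mul] at h1
      nlinarith [abs_nonneg (x q)]
    calc α * |x q| ≤ (|K q q| - ∑ r ∈ Finset.univ.erase q, |K q r|) * |x q| :=
          mul_le_mul_of_nonneg_right (hα q) (abs_nonneg _)
      _ ≤ |c q| := h3
      _ ≤ M := hM q
  intro r
  have := hq r (Finset.mem_univ r)
  calc |x r| ≤ |x q| := this
    _ ≤ M / α := (le_div_iff₀ hαpos).mpr (by linarith [key])

/-- Corollary 6: under the hypotheses of Theorem 5, if additionally `Stilde = S + U` with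
`max_{i,j} |U i j| ≤ lam` (as for the l1-penalized maximum likelihood covariance estimate
with penalty `lam`), then `max_{i,j} |Stilde i j - Shat i j| ≤ ξ / α + lam`. -/
theorem stmt_11 (p : ℕ) (hp : 0 < p)
    (Lhat S Shat C : Matrix (Fin p) (Fin p) ℝ)
    (h1 : Lhat * S + S * Lhatᵀ = (2 : ℝ) • (1 : Matrix (Fin p) (Fin p) ℝ) + C)
    (h2 : Lhat * Shat + Shat * Lhatᵀ = (2 : ℝ) • (1 : Matrix (Fin p) (Fin p) ℝ))
    (K : Matrix (Fin p × Fin p) (Fin p × Fin p) ℝ)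
    (hK : ∀ i j k l : Fin p, K (i, j) (k, l) =
      Lhat i k * (if j = l then 1 else 0) + Lhat j l * (if i = k then 1 else 0))
    (α : ℝ) (hαpos : 0 < α)
    (hα : α = Finset.univ.inf'
      (Finset.univ_nonempty_iff.mpr ⟨(⟨0, hp⟩, ⟨0, hp⟩)⟩)
      (fun q : Fin p × Fin p => |K q q| - ∑ r ∈ Finset.univ.erase q, |K q r|))
    (ξ : ℝ) (hξ : ξ = Real.sqrt (∑ i, ∑ j, (C i j) ^ 2))
    (Stilde U : Matrix (Fin p) (Fin p) ℝ) (lam : ℝ)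
    (hStilde : Stilde = S + U) (hU : ∀ i j, |U i j| ≤ lam) :
    ∀ i j : Fin p, |Stilde i j - Shat i j| ≤ ξ / α + lam := by
  haveI : Nonempty (Fin p) := ⟨⟨0, hp⟩⟩
  set D := S - Shat with hDdef
  have hD : Lhat * D + D * Lhatᵀ = C := by
    have e : Lhat * D + D * Lhatᵀ
        = (Lhat * S + S * Lhatᵀ) - (Lhat * Shat + Shat * Lhatᵀ) := by
      rw [hDdef]; noncomm_ring
    rw [e, h1, h2]; abel
  -- vectorization
  have hmul : K.mulVec (fun q => D q.1 q.2) = fun q => C q.1 q.2 := by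
    funext q
    obtain ⟨i, j⟩ := q
    have := congrFun (congrFun hD i) j
    simp only [Matrix.add_apply, Matrix.mul_apply, Matrix.transpose_apply] at this
    simp only [Matrix.mulVec, dotProduct, Fintype.sum_prod_type]
    calc ∑ k, ∑ l, K (i, j) (k, l) * D k l
        = ∑ k, ∑ l, (Lhat i k * (if j = l then 1 else 0) * D k l
            + Lhat j l * (if i = k then 1 else 0) * D k l) := by
          simp only [hK, add_mul]
      _ = (∑ k, Lhat i k * D k j) + ∑ l, D i l * Lhat j l := by
          rw [← Finset.sum_add_distrib]
          simp [Finset.sum_add_distrib, mul_ite, ite_mul, Finset.sum_ite_eq,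
            mul_comm, mul_assoc]
      _ = C i j := this
  -- bound |C i j| ≤ ξ
  have hCbound : ∀ q : Fin p × Fin p, |C q.1 q.2| ≤ ξ := by
    intro ⟨i, j⟩
    rw [hξ]
    have : |C i j| = Real.sqrt ((C i j) ^ 2) := by
      rw [Real.sqrt_sq_eq_abs]
    rw [this]
    apply Real.sqrt_le_sqrt
    calc (C i j) ^ 2 ≤ ∑ l, (C i l) ^ 2 :=
          Finset.single_le_sum (f := fun l => (C i l) ^ 2) (fun l _ => sq_nonneg _) (Finset.mem_univ j)
      _ ≤ ∑ k, ∑ l, (C k l) ^ 2 :=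
          Finset.single_le_sum (f := fun k => ∑ l, (C k l) ^ 2)
            (fun k _ => Finset.sum_nonneg fun l _ => sq_nonneg _) (Finset.mem_univ i)
  have hαle : ∀ q : Fin p × Fin p,
      α ≤ |K q q| - ∑ r ∈ Finset.univ.erase q, |K q r| := by
    intro q
    rw [hα]
    exact Finset.inf'_le _ (Finset.mem_univ q)
  have hDbound := sdd_bound K (fun q => D q.1 q.2) (fun q => C q.1 q.2) hmul
    α hαpos hαle ξ hCbound
  intro i j
  have h4 := hDbound (i, j)
  have h5 := hU i j
  have : Stilde i j - Shat i j = D i j + U i j := by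
    rw [hStilde, hDdef]; simp [Matrix.add_apply, Matrix.sub_apply]; ring
  rw [this]
  calc |D i j + U i j| ≤ |D i j| + |U i j| := abs_add_le _ _
    _ ≤ ξ / α + lam := add_le_add h4 h5
end

section
/- (Sufficiency of the diagonal adjustment for strict diagonal dominance.) Let L ∈ ℝ^{p×p}, let ν_r := max_j ∑_{i≠j} |L_{j,i}| be the maximal off-diagonal absolute row sum and ν_c := max_j ∑_{i≠j} |L_{i,j}| the maximal off-diagonal absolute column sum, and suppose L_{i,i} > ν_r + ν_c for every i. Then the matrix K indexed by pairs (i,j),(k,l) ∈ {1,…,p}² with entries K_{(i,j),(k,l)} = L_{i,k}·δ_{j,l} + L_{j,l}·δ_{i,k} (representing X ↦ L·X + X·Lᵀ) is strictly diagonally dominant. -/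
open Matrix

/-- Sufficiency of the diagonal adjustment for strict diagonal dominance: if every
diagonal entry of `L` exceeds `νr + νc`, where `νr` and `νc` are the maximal off-diagonal
absolute row and column sums of `L`, then the Kronecker-sum matrix `K` of `L`
(representing `X ↦ L * X + X * Lᵀ`) is strictly diagonally dominant. -/
theorem stmt_12 (p : ℕ) (hp : 0 < p) (L : Matrix (Fin p) (Fin p) ℝ)
    (νr νc : ℝ)
    (hνr : νr = Finset.univ.sup'
      (Finset.univ_nonempty_iff.mpr (Fin.pos_iff_nonempty.mp hp))
      (fun j => ∑ i ∈ Finset.univ.erase j, |L j i|))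
    (hνc : νc = Finset.univ.sup'
      (Finset.univ_nonempty_iff.mpr (Fin.pos_iff_nonempty.mp hp))
      (fun j => ∑ i ∈ Finset.univ.erase j, |L i j|))
    (hdiag : ∀ i, νr + νc < L i i)
    (K : Matrix (Fin p × Fin p) (Fin p × Fin p) ℝ)
    (hK : ∀ i j k l : Fin p, K (i, j) (k, l) =
      L i k * (if j = l then 1 else 0) + L j l * (if i = k then 1 else 0)) :
    ∀ q : Fin p × Fin p, ∑ r ∈ Finset.univ.erase q, |K q r| < |K q q| := by
  intro q
  obtain ⟨i, j⟩ := q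
  have hνc0 : 0 ≤ νc := by
    rw [hνc]
    exact le_trans (Finset.sum_nonneg fun _ _ => abs_nonneg _)
      (Finset.le_sup' (fun j => ∑ i ∈ Finset.univ.erase j, |L i j|) (Finset.mem_univ i))
  have hrow : ∀ a : Fin p, ∑ k ∈ Finset.univ.erase a, |L a k| ≤ νr := by
    intro a; rw [hνr]; exact Finset.le_sup' (fun j => ∑ i ∈ Finset.univ.erase j, |L j i|) (Finset.mem_univ a)
  have hνr0 : 0 ≤ νr :=
    le_trans (Finset.sum_nonneg fun k _ => abs_nonneg (L i k)) (hrow i)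
  have hKpos : 0 < L i i + L j j := by
    have h1 := hdiag i; have h2 := hdiag j; linarith
  have habs : |K (i, j) (i, j)| = L i i + L j j := by
    rw [hK]; simp; exact hKpos.le
  set g : Fin p × Fin p → ℝ := fun r =>
    |L i r.1| * (if j = r.2 then 1 else 0) + |L j r.2| * (if i = r.1 then 1 else 0) with hg
  have hbound : ∑ r ∈ Finset.univ.erase (i, j), |K (i, j) r|
      ≤ ∑ r ∈ Finset.univ.erase (i, j), g r := by
    apply Finset.sum_le_sum
    intro r _
    rw [hg]
    obtain ⟨k, l⟩ := r
    rw [hK i j k l]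
    calc |L i k * (if j = l then 1 else 0) + L j l * (if i = k then 1 else 0)|
        ≤ |L i k * (if j = l then 1 else 0)| + |L j l * (if i = k then 1 else 0)| :=
          abs_add_le _ _
      _ = |L i k| * (if j = l then 1 else 0) + |L j l| * (if i = k then 1 else 0) := by
          split_ifs <;> simp [abs_mul]
  have hfull : ∑ r : Fin p × Fin p, g r = (∑ k, |L i k|) + (∑ l, |L j l|) := by
    rw [hg, Fintype.sum_prod_type]
    simp [Finset.sum_add_distrib, mul_ite, mul_one, mul_zero, Finset.sum_ite_eq]
  have herase : ∑ r ∈ Finset.univ.erase (i, j), g r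
      = (∑ k, |L i k|) + (∑ l, |L j l|) - (|L i i| + |L j j|) := by
    have := Finset.sum_erase_add Finset.univ g (Finset.mem_univ (i, j))
    have hgii : g (i, j) = |L i i| + |L j j| := by simp [hg]
    rw [hgii] at this
    linarith [hfull ▸ this]
  have hrowi : ∑ k ∈ Finset.univ.erase i, |L i k| = (∑ k, |L i k|) - |L i i| := by
    have := Finset.sum_erase_add Finset.univ (fun k => |L i k|) (Finset.mem_univ i)
    linarith
  have hrowj : ∑ l ∈ Finset.univ.erase j, |L j l| = (∑ l, |L j l|) - |L j j| := by
    have := Finset.sum_erase_add Finset.univ (fun l => |L j l|) (Finset.mem_univ j)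
    linarith
  have h1 := hrow i
  have h2 := hrow j
  have hd1 := hdiag i
  have hd2 := hdiag j
  rw [habs]
  rw [hrowi] at h1
  rw [hrowj] at h2
  linarith [hbound, herase]
end

section
/- (Proposition 2, Appendix: steady-state equivalence on the subspace orthogonal to the all-ones vector.) Let p ≥ 2 and let Q ∈ ℝ^{(p−1)×p} satisfy Q·Qᵀ = I_{p−1}, Q·𝟙_p = 0, and Qᵀ·Q = I_p − (1/p)·𝟙_p·𝟙_pᵀ. Let Σ ∈ ℝ^{p×p} be symmetric, and let Σ⁺ ∈ ℝ^{p×p} satisfy Σ⁺·Σ = Σ·Σ⁺ = Qᵀ·Q and Σ⁺·𝟙_p = 0 (the defining properties of the Moore–Penrose pseudoinverse when Σ is positive semi-definite of rank p−1 with kernel spanned by 𝟙_p). Let Ψ ∈ ℝ^{p×p} be a projection onto the subspace orthogonal to 𝟙_p satisfying Q·Ψ = Q, and let κ ∈ ℝ^{p×p} be skew-symmetric. Define L := Ψ·(I_p + κ)·Σ⁺, the reduced Laplacian L̄ := Q·L·Qᵀ, and the reduced covariance Σ̄ := Q·Σ·Qᵀ. Then L̄·Σ̄ + Σ̄·L̄ᵀ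 = 2·I_{p−1}. -/
open Matrix

/-- Proposition 2 (Appendix): steady-state equivalence on the subspace orthogonal to the
all-ones vector. With `Q` having orthonormal rows spanning `𝟙⊥` (`Q * Qᵀ = I`,
`Q *ᵥ 𝟙 = 0`, `Qᵀ * Q = I - (1/p) 𝟙𝟙ᵀ`), `Sig` symmetric, `Sp` a pseudoinverse of `Sig`
(`Sp * Sig = Sig * Sp = Qᵀ * Q`, `Sp *ᵥ 𝟙 = 0`), `Ψ` a projection with `Q * Ψ = Q` and
`Ψ *ᵥ 𝟙 = 0`, and `κ` skew-symmetric, the matrix `Lm = Ψ * (I + κ) * Sp` satisfies the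
reduced Lyapunov equation `L̄ * Σ̄ + Σ̄ * L̄ᵀ = 2 • I` where `L̄ = Q * Lm * Qᵀ` and
`Σ̄ = Q * Sig * Qᵀ`. -/
theorem stmt_14 (p : ℕ) (hp : 2 ≤ p)
    (Q : Matrix (Fin (p - 1)) (Fin p) ℝ)
    (hQ1 : Q * Qᵀ = (1 : Matrix (Fin (p - 1)) (Fin (p - 1)) ℝ))
    (hQ2 : Q *ᵥ (fun _ => (1 : ℝ)) = 0)
    (hQ3 : Qᵀ * Q =
      (1 : Matrix (Fin p) (Fin p) ℝ) - (p : ℝ)⁻¹ • Matrix.of (fun _ _ => (1 : ℝ)))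
    (Sig Sp Ψ κ Lm : Matrix (Fin p) (Fin p) ℝ)
    (hSigSymm : Sigᵀ = Sig)
    (hSp1 : Sp * Sig = Qᵀ * Q) (hSp2 : Sig * Sp = Qᵀ * Q)
    (hSp3 : Sp *ᵥ (fun _ => (1 : ℝ)) = 0)
    (hΨproj : Ψ * Ψ = Ψ) (hΨQ : Q * Ψ = Q)
    (hΨ1 : Ψ *ᵥ (fun _ => (1 : ℝ)) = 0)
    (hκ : κᵀ = -κ)
    (hLm : Lm = Ψ * (1 + κ) * Sp) :
    (Q * Lm * Qᵀ) * (Q * Sig * Qᵀ) + (Q * Sig * Qᵀ) * (Q * Lm * Qᵀ)ᵀ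
      = (2 : ℝ) • (1 : Matrix (Fin (p - 1)) (Fin (p - 1)) ℝ) := by
  have hSpJ : Sp * Matrix.of (fun _ _ => (1 : ℝ)) = 0 := by
    ext i j
    have := congrFun hSp3 i
    simpa [Matrix.mul_apply, Matrix.mulVec, dotProduct] using this
  have hSpQQ : Sp * (Qᵀ * Q) = Sp := by
    rw [hQ3, Matrix.mul_sub, Matrix.mul_one, Matrix.mul_smul, hSpJ, smul_zero, sub_zero]
  have hLmQQ : Lm * (Qᵀ * Q) = Lm := by
    rw [hLm, Matrix.mul_assoc, hSpQQ]
  have hQQQ : Qᵀ * Q * Qᵀ = Qᵀ := by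
    rw [Matrix.mul_assoc, hQ1, Matrix.mul_one]
  have hLmSig : Lm * Sig = Ψ * (1 + κ) * (Qᵀ * Q) := by
    rw [hLm, Matrix.mul_assoc, hSp1]
  have h1 : (Q * Lm * Qᵀ) * (Q * Sig * Qᵀ) = 1 + Q * κ * Qᵀ := by
    calc (Q * Lm * Qᵀ) * (Q * Sig * Qᵀ)
        = Q * (Lm * (Qᵀ * Q)) * Sig * Qᵀ := by
          simp only [Matrix.mul_assoc]
      _ = Q * (Lm * Sig) * Qᵀ := by rw [hLmQQ]; simp only [Matrix.mul_assoc]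
      _ = Q * Ψ * (1 + κ) * (Qᵀ * Q * Qᵀ) := by
          rw [hLmSig]; simp only [Matrix.mul_assoc]
      _ = Q * (1 + κ) * Qᵀ := by rw [hQQQ, hΨQ]
      _ = 1 + Q * κ * Qᵀ := by
          rw [Matrix.mul_add, Matrix.mul_one, Matrix.add_mul, hQ1]
  have h2 : (Q * Sig * Qᵀ) * (Q * Lm * Qᵀ)ᵀ = 1 - Q * κ * Qᵀ := by
    have ht : (Q * Lm * Qᵀ)ᵀ = Q * Lmᵀ * Qᵀ := by
      simp [Matrix.transpose_mul, Matrix.mul_assoc]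
    have hQQLmT : Qᵀ * Q * Lmᵀ = Lmᵀ := by
      have := congrArg Matrix.transpose hLmQQ
      simpa [Matrix.transpose_mul, Matrix.mul_assoc] using this
    calc (Q * Sig * Qᵀ) * (Q * Lm * Qᵀ)ᵀ
        = Q * Sig * (Qᵀ * Q * Lmᵀ) * Qᵀ := by
          rw [ht]; simp only [Matrix.mul_assoc]
      _ = Q * (Lm * Sig)ᵀ * Qᵀ := by
          rw [hQQLmT, Matrix.transpose_mul, hSigSymm]
          simp only [Matrix.mul_assoc]
      _ = Q * ((Qᵀ * Q) * ((1 + κ)ᵀ * Ψᵀ)) * Qᵀ := by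
          rw [hLmSig]
          simp only [Matrix.transpose_mul, Matrix.transpose_transpose, Matrix.mul_assoc]
      _ = (Q * (Qᵀ * Q)) * ((1 + κ)ᵀ * (Ψᵀ * Qᵀ)) := by
          simp only [Matrix.mul_assoc]
      _ = Q * ((1 + κ)ᵀ * Qᵀ) := by
          rw [← Matrix.mul_assoc Q Qᵀ Q, hQ1, Matrix.one_mul,
            ← Matrix.transpose_mul, hΨQ]
      _ = 1 - Q * κ * Qᵀ := by
          rw [Matrix.transpose_add, Matrix.transpose_one, hκ, ← sub_eq_add_neg,
            Matrix.sub_mul, Matrix.one_mul, Matrix.mul_sub, hQ1, Matrix.mul_assoc]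
  rw [h1, h2]
  ring_nf
  rw [two_smul]
  abel
end
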